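/- arXiv:2010.04754 — 4 statements merged into one kernel-verified Lean document; each statement's English description precedes it below -/
import Mathlib

section
/- Let E and F be finite-dimensional real inner product spaces, A : E →ₗ F a linear map with adjoint A† : F →ₗ E, and Δt > 0. Suppose sequences uⁿ ∈ E (n = 0,1,2,…) and v^{n+1/2} ∈ F (n = 0,1,2,…) satisfy the staggered leapfrog scheme (u^{n+1} − uⁿ)/Δt = −A† v^{n+1/2} for all n ≥ 0 and (v^{n+1/2} − v^{n−1/2})/Δt = A uⁿ for all n ≥ 1. Then the quantity Cⁿ = ‖uⁿ‖² + ‖(v^{n+1/2} + v^{n−1/2})/2‖² − (Δt/2)²·‖A uⁿ‖² has the same value for every n ≥ 1. -/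
open RealInnerProductSpace

/-!
Writing `w^n = (v^{n+1/2} + v^{n-1/2})/2`, the two half-steps of the scheme give
`w^{n+1} = v^{n+1/2} + (Δt/2) A u^{n+1}` and `w^n = v^{n+1/2} - (Δt/2) A u^n`, so the correction
`-(Δt/2)²‖A u‖²` exactly cancels the quadratic terms of `‖w‖²`, leaving
`Cⁿ⁺¹ - Cⁿ = ‖u^{n+1}‖² - ‖u^n‖² + Δt ⟪A (u^n + u^{n+1}), v^{n+1/2}⟫`.
This vanishes because `‖u^{n+1}‖² - ‖u^n‖² = ⟪u^{n+1} - u^n, u^{n+1} + u^n⟫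
= -Δt ⟪A† v^{n+1/2}, u^n + u^{n+1}⟫`.
-/

section LeapfrogEnergy

variable {E F : Type*} [NormedAddCommGroup E] [InnerProductSpace ℝ E]
  [NormedAddCommGroup F] [InnerProductSpace ℝ F]

theorem norm_sq_sub_norm_sq_eq_inner (x y : E) : ‖x‖ ^ 2 - ‖y‖ ^ 2 = ⟪x - y, x + y⟫ := by
  rw [← real_inner_self_eq_norm_sq, ← real_inner_self_eq_norm_sq]
  simp only [inner_sub_left, inner_add_right, real_inner_comm x y]
  ring

/-- `leapfrogEnergy A Δt u p q` is `Cⁿ` evaluated at `u = uⁿ`, `p = v^{n-1/2}`, `q = v^{n+1/2}`. -/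
noncomputable def leapfrogEnergy (A : E →ₗ[ℝ] F) (Δt : ℝ) (u : E) (p q : F) : ℝ :=
  ‖u‖ ^ 2 + ‖(2:ℝ)⁻¹ • (q + p)‖ ^ 2 - (Δt / 2) ^ 2 * ‖A u‖ ^ 2

theorem leapfrogEnergy_eq_of_sub_eq_left (A : E →ₗ[ℝ] F) (Δt : ℝ) (a : E) (p q : F)
    (hq : q - p = Δt • A a) :
    leapfrogEnergy A Δt a p q = ‖a‖ ^ 2 + ‖q‖ ^ 2 - Δt * ⟪A a, q⟫ := by
  have hmid : (2:ℝ)⁻¹ • (q + p) = q - (Δt / 2) • A a := by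
    rw [show p = q - Δt • A a by rw [← hq]; abel]
    module
  rw [leapfrogEnergy, hmid, norm_sub_sq_real, norm_smul, real_inner_smul_right,
    real_inner_comm, Real.norm_eq_abs, mul_pow, sq_abs]
  ring

theorem leapfrogEnergy_eq_of_sub_eq_right (A : E →ₗ[ℝ] F) (Δt : ℝ) (b : E) (q r : F)
    (hr : r - q = Δt • A b) :
    leapfrogEnergy A Δt b q r = ‖b‖ ^ 2 + ‖q‖ ^ 2 + Δt * ⟪A b, q⟫ := by
  have hmid : (2:ℝ)⁻¹ • (r + q) = q + (Δt / 2) • A b := by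
    rw [show r = q + Δt • A b by rw [← hr]; abel]
    module
  rw [leapfrogEnergy, hmid, norm_add_sq_real, norm_smul, real_inner_smul_right,
    real_inner_comm, Real.norm_eq_abs, mul_pow, sq_abs]
  ring

theorem leapfrogEnergy_step (A : E →ₗ[ℝ] F) (B : F →ₗ[ℝ] E)
    (hadj : ∀ (x : E) (y : F), ⟪A x, y⟫ = ⟪x, B y⟫) (Δt : ℝ) (a b : E) (p q r : F)
    (hu : b - a = -(Δt • B q)) (hp : q - p = Δt • A a) (hr : r - q = Δt • A b) :
    leapfrogEnergy A Δt b q r = leapfrogEnergy A Δt a p q := by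
  have hnorm : ‖b‖ ^ 2 - ‖a‖ ^ 2 = -Δt * (⟪A b, q⟫ + ⟪A a, q⟫) := by
    rw [← inner_add_left, ← map_add, norm_sq_sub_norm_sq_eq_inner, hu, hadj, real_inner_comm,
      inner_neg_right, real_inner_smul_right]
    ring
  rw [leapfrogEnergy_eq_of_sub_eq_right A Δt b q r hr,
    leapfrogEnergy_eq_of_sub_eq_left A Δt a p q hp]
  linarith

end LeapfrogEnergy

-- `v n` stands for `v^{n+1/2}` and `B` for the adjoint `A†`.
theorem stmt_9_general
    {E F : Type*} [NormedAddCommGroup E] [InnerProductSpace ℝ E]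
    [NormedAddCommGroup F] [InnerProductSpace ℝ F]
    (A : E →ₗ[ℝ] F) (B : F →ₗ[ℝ] E)
    (hadj : ∀ (x : E) (y : F), ⟪A x, y⟫ = ⟪x, B y⟫)
    (Δt : ℝ) (hΔt : 0 < Δt)
    (u : ℕ → E) (v : ℕ → F)
    (h1 : ∀ n : ℕ, (Δt)⁻¹ • (u (n + 1) - u n) = -(B (v n)))
    (h2 : ∀ n : ℕ, 1 ≤ n → (Δt)⁻¹ • (v n - v (n - 1)) = A (u n)) :
    ∀ m n : ℕ, 1 ≤ m → 1 ≤ n →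
      ‖u m‖^2 + ‖(2:ℝ)⁻¹ • (v m + v (m - 1))‖^2 - (Δt / 2)^2 * ‖A (u m)‖^2
        = ‖u n‖^2 + ‖(2:ℝ)⁻¹ • (v n + v (n - 1))‖^2 - (Δt / 2)^2 * ‖A (u n)‖^2 := by
  have hu (n : ℕ) : u (n + 1) - u n = -(Δt • B (v n)) := by
    rw [← smul_neg, ← inv_smul_eq_iff₀ hΔt.ne', h1]
  have hv (n : ℕ) (hn : 1 ≤ n) : v n - v (n - 1) = Δt • A (u n) := by
    rw [← inv_smul_eq_iff₀ hΔt.ne', h2 n hn]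
  have hconst (n : ℕ) (hn : 1 ≤ n) :
      leapfrogEnergy A Δt (u n) (v (n - 1)) (v n) = leapfrogEnergy A Δt (u 1) (v 0) (v 1) := by
    induction n, hn using Nat.le_induction with
    | base => rfl
    | succ n hn ih =>
      rw [← ih, Nat.add_sub_cancel]
      exact leapfrogEnergy_step A B hadj Δt _ _ _ _ _ (hu n) (hv n hn) (hv (n + 1) (by omega))
  intro m n hm hn
  exact (hconst m hm).trans (hconst n hn).symm

/-- For the staggered leapfrog scheme `(u^{n+1} − uⁿ)/Δt = −A† v^{n+1/2}`,
`(v^{n+1/2} − v^{n−1/2})/Δt = A uⁿ`, the quantity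
`Cⁿ = ‖uⁿ‖² + ‖(v^{n+1/2}+v^{n−1/2})/2‖² − (Δt/2)²‖A uⁿ‖²` is the same for all `n ≥ 1`.
Here `v n` denotes `v^{n+1/2}` and `B = A†` is characterized by `⟪A u, v⟫ = ⟪u, B v⟫`. -/
theorem stmt_9
    {E F : Type*} [NormedAddCommGroup E] [InnerProductSpace ℝ E] [FiniteDimensional ℝ E]
    [NormedAddCommGroup F] [InnerProductSpace ℝ F] [FiniteDimensional ℝ F]
    (A : E →ₗ[ℝ] F) (B : F →ₗ[ℝ] E)
    (hadj : ∀ (x : E) (y : F), ⟪A x, y⟫ = ⟪x, B y⟫)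
    (Δt : ℝ) (hΔt : 0 < Δt)
    (u : ℕ → E) (v : ℕ → F)
    (h1 : ∀ n : ℕ, (Δt)⁻¹ • (u (n + 1) - u n) = -(B (v n)))
    (h2 : ∀ n : ℕ, 1 ≤ n → (Δt)⁻¹ • (v n - v (n - 1)) = A (u n)) :
    ∀ m n : ℕ, 1 ≤ m → 1 ≤ n →
      ‖u m‖^2 + ‖(2:ℝ)⁻¹ • (v m + v (m - 1))‖^2 - (Δt / 2)^2 * ‖A (u m)‖^2
        = ‖u n‖^2 + ‖(2:ℝ)⁻¹ • (v n + v (n - 1))‖^2 - (Δt / 2)^2 * ‖A (u n)‖^2 :=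
  stmt_9_general A B hadj Δt hΔt u v h1 h2
end

section
/- Let E and F be finite-dimensional real inner product spaces, A : E →ₗ F a linear map with adjoint A† : F →ₗ E, and Δt > 0. Suppose sequences uⁿ ∈ E (n = 0,1,2,…) and v^{n+1/2} ∈ F (n = 0,1,2,…) satisfy the staggered leapfrog scheme (u^{n+1} − uⁿ)/Δt = −A† v^{n+1/2} for all n ≥ 0 and (v^{n+1/2} − v^{n−1/2})/Δt = A uⁿ for all n ≥ 1. Then the quantity C^{n+1/2} = ‖(u^{n+1} + uⁿ)/2‖² + ‖v^{n+1/2}‖² − (Δt/2)²·‖A† v^{n+1/2}‖² has the same value for every n ≥ 0. -/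
/-!
By polarization, `‖(x + y)/2‖² - ‖(x - y)/2‖² = ⟪x, y⟫`, so along the scheme the quantity
`C^{n+1/2}` equals `⟪u^{n+1}, uⁿ⟫ + ‖v^{n+1/2}‖²`. Its increment from `n - 1/2` to `n + 1/2` is
`⟪u^{n+1} - u^{n-1}, uⁿ⟫ + ⟪v^{n+1/2} - v^{n-1/2}, v^{n+1/2} + v^{n-1/2}⟫`, and the scheme turns
these two terms into `∓ Δt ⟪A uⁿ, v^{n+1/2} + v^{n-1/2}⟫`, which cancel by adjointness.
-/

open RealInnerProductSpace

section LeapfrogEnergy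

variable {E F : Type*} [NormedAddCommGroup E] [InnerProductSpace ℝ E]
  [NormedAddCommGroup F] [InnerProductSpace ℝ F]

theorem real_inner_eq_norm_half_add_sq_sub_norm_half_sub_sq (x y : E) :
    ⟪x, y⟫ = ‖(2:ℝ)⁻¹ • (x + y)‖ ^ 2 - ‖(2:ℝ)⁻¹ • (x - y)‖ ^ 2 := by
  rw [norm_smul, norm_smul, mul_pow, mul_pow, norm_add_sq_real, norm_sub_sq_real, norm_inv,
    Real.norm_two]
  ring

theorem norm_sq_sub_norm_sq_eq_real_inner (x y : F) :
    ‖x‖ ^ 2 - ‖y‖ ^ 2 = ⟪x - y, x + y⟫ := by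
  rw [inner_sub_left, inner_add_right, inner_add_right, real_inner_self_eq_norm_sq,
    real_inner_self_eq_norm_sq, real_inner_comm x y]
  ring

variable {A : E →ₗ[ℝ] F} {B : F →ₗ[ℝ] E} {τ : ℝ} {u : ℕ → E} {v : ℕ → F}

theorem leapfrog_energy_eq_inner_add_norm_sq (hu : ∀ n, u (n + 1) - u n = -(τ • B (v n)))
    (n : ℕ) :
    ‖(2:ℝ)⁻¹ • (u (n + 1) + u n)‖ ^ 2 + ‖v n‖ ^ 2 - (τ / 2) ^ 2 * ‖B (v n)‖ ^ 2
      = ⟪u (n + 1), u n⟫ + ‖v n‖ ^ 2 := by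
  have hdiff : ‖(2:ℝ)⁻¹ • (u (n + 1) - u n)‖ ^ 2 = (τ / 2) ^ 2 * ‖B (v n)‖ ^ 2 := by
    rw [hu, norm_smul, norm_neg, norm_smul, Real.norm_eq_abs, Real.norm_eq_abs, mul_pow,
      mul_pow, sq_abs, sq_abs]
    ring
  rw [real_inner_eq_norm_half_add_sq_sub_norm_half_sub_sq, hdiff]
  ring

theorem leapfrog_inner_add_norm_sq_succ (hadj : ∀ (x : E) (y : F), ⟪A x, y⟫ = ⟪x, B y⟫)
    (hu : ∀ n, u (n + 1) - u n = -(τ • B (v n)))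
    (hv : ∀ n, v (n + 1) - v n = τ • A (u (n + 1))) (n : ℕ) :
    ⟪u (n + 2), u (n + 1)⟫ + ‖v (n + 1)‖ ^ 2 = ⟪u (n + 1), u n⟫ + ‖v n‖ ^ 2 := by
  have hu_two : u (n + 2) - u n = -(τ • B (v (n + 1) + v n)) := by
    rw [← sub_add_sub_cancel _ (u (n + 1)), hu, hu, map_add, smul_add, neg_add]
  have hinner : ⟪u (n + 2), u (n + 1)⟫ - ⟪u (n + 1), u n⟫
      = -(τ * ⟪A (u (n + 1)), v (n + 1) + v n⟫) := by
    rw [real_inner_comm (u n) (u (n + 1)), ← inner_sub_left, hu_two, inner_neg_left,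
      real_inner_smul_left, real_inner_comm, ← hadj]
  have hnorm : ‖v (n + 1)‖ ^ 2 - ‖v n‖ ^ 2 = τ * ⟪A (u (n + 1)), v (n + 1) + v n⟫ := by
    rw [norm_sq_sub_norm_sq_eq_real_inner, hv, real_inner_smul_left]
  linarith

end LeapfrogEnergy

theorem stmt_10_general
    {E F : Type*} [NormedAddCommGroup E] [InnerProductSpace ℝ E]
    [NormedAddCommGroup F] [InnerProductSpace ℝ F]
    (A : E →ₗ[ℝ] F) (B : F →ₗ[ℝ] E)
    (hadj : ∀ (x : E) (y : F), ⟪A x, y⟫ = ⟪x, B y⟫)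
    (Δt : ℝ) (hΔt : 0 < Δt)
    (u : ℕ → E) (v : ℕ → F)
    (h1 : ∀ n : ℕ, (Δt)⁻¹ • (u (n + 1) - u n) = -(B (v n)))
    (h2 : ∀ n : ℕ, 1 ≤ n → (Δt)⁻¹ • (v n - v (n - 1)) = A (u n)) :
    ∀ m n : ℕ,
      ‖(2:ℝ)⁻¹ • (u (m + 1) + u m)‖^2 + ‖v m‖^2 - (Δt / 2)^2 * ‖B (v m)‖^2
        = ‖(2:ℝ)⁻¹ • (u (n + 1) + u n)‖^2 + ‖v n‖^2 - (Δt / 2)^2 * ‖B (v n)‖^2 := by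
  have hu : ∀ n, u (n + 1) - u n = -(Δt • B (v n)) := fun n => by
    rw [(inv_smul_eq_iff₀ hΔt.ne').mp (h1 n), smul_neg]
  have hv : ∀ n, v (n + 1) - v n = Δt • A (u (n + 1)) := fun n =>
    (inv_smul_eq_iff₀ hΔt.ne').mp (h2 (n + 1) (Nat.le_add_left 1 n))
  have hconst : ∀ n, ⟪u (n + 1), u n⟫ + ‖v n‖ ^ 2 = ⟪u 1, u 0⟫ + ‖v 0‖ ^ 2 := fun n => by
    induction n with
    | zero => rfl
    | succ k ih => rw [leapfrog_inner_add_norm_sq_succ hadj hu hv, ih]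
  intro m n
  rw [leapfrog_energy_eq_inner_add_norm_sq hu, leapfrog_energy_eq_inner_add_norm_sq hu,
    hconst m, hconst n]

/-- For the staggered leapfrog scheme `(u^{n+1} − uⁿ)/Δt = −A† v^{n+1/2}`,
`(v^{n+1/2} − v^{n−1/2})/Δt = A uⁿ`, the quantity
`C^{n+1/2} = ‖(u^{n+1}+uⁿ)/2‖² + ‖v^{n+1/2}‖² − (Δt/2)²‖A† v^{n+1/2}‖²` is the same for
all `n ≥ 0`. Here `v n` denotes `v^{n+1/2}` and `B = A†` satisfies `⟪A u, v⟫ = ⟪u, B v⟫`. -/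
theorem stmt_10
    {E F : Type*} [NormedAddCommGroup E] [InnerProductSpace ℝ E] [FiniteDimensional ℝ E]
    [NormedAddCommGroup F] [InnerProductSpace ℝ F] [FiniteDimensional ℝ F]
    (A : E →ₗ[ℝ] F) (B : F →ₗ[ℝ] E)
    (hadj : ∀ (x : E) (y : F), ⟪A x, y⟫ = ⟪x, B y⟫)
    (Δt : ℝ) (hΔt : 0 < Δt)
    (u : ℕ → E) (v : ℕ → F)
    (h1 : ∀ n : ℕ, (Δt)⁻¹ • (u (n + 1) - u n) = -(B (v n)))
    (h2 : ∀ n : ℕ, 1 ≤ n → (Δt)⁻¹ • (v n - v (n - 1)) = A (u n)) :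
    ∀ m n : ℕ,
      ‖(2:ℝ)⁻¹ • (u (m + 1) + u m)‖^2 + ‖v m‖^2 - (Δt / 2)^2 * ‖B (v m)‖^2
        = ‖(2:ℝ)⁻¹ • (u (n + 1) + u n)‖^2 + ‖v n‖^2 - (Δt / 2)^2 * ‖B (v n)‖^2 :=
  stmt_10_general A B hadj Δt hΔt u v h1 h2
end

section
/- Fix an integer N ≥ 2, Δx > 0, Δt > 0, and let ρ : {0,…,N−1} → ℝ and τ : {0,…,N−2} → ℝ have positive values. Set s = √(max τ / min ρ), where max τ = max_{0≤i≤N−2} τ_i and min ρ = min_{0≤i≤N−1} ρ_i. Then for any primal-grid function u and dual-grid functions v, w, the quantity C = ‖u‖_ρ² + ‖(v + w)/2‖_τ² − (Δt/2)²·‖Au‖_τ², with (Au)_i = τ_i·(u_{i+1} − u_i)/Δx, satisfies C ≥ (1 − (s·Δt/Δx)²)·‖u‖_ρ² + ‖(v + w)/2‖_τ². In particular, C ≥ 0 whenever s·Δt/Δx ≤ 1. -/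
/-! With `M = max τ` and `m = min ρ`, the discrete gradient satisfies
`‖Au‖_τ² = Δx⁻¹ ∑ τᵢ (uᵢ₊₁ - uᵢ)² ≤ (M / Δx) ∑ (uᵢ₊₁ - uᵢ)²`, and
`(a - b)² ≤ 2a² + 2b²` gives `∑ (uᵢ₊₁ - uᵢ)² ≤ 4 ∑ uᵢ² ≤ 4 ‖u‖_ρ² / (m Δx)`.
Hence `(Δt/2)² ‖Au‖_τ² ≤ (M/m) (Δt/Δx)² ‖u‖_ρ² = (sΔt/Δx)² ‖u‖_ρ²`. -/

open Finset

theorem sum_range_sq_sub_succ_le (N : ℕ) (u : ℕ → ℝ) :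
    ∑ i ∈ range (N - 1), (u (i + 1) - u i) ^ 2 ≤ 4 * ∑ i ∈ range N, u i ^ 2 := by
  rcases N with _ | n
  · simp
  have hshift : ∑ i ∈ range n, u (i + 1) ^ 2 ≤ ∑ i ∈ range (n + 1), u i ^ 2 := by
    rw [sum_range_succ']
    exact le_add_of_nonneg_right (sq_nonneg _)
  have hdrop : ∑ i ∈ range n, u i ^ 2 ≤ ∑ i ∈ range (n + 1), u i ^ 2 := by
    rw [sum_range_succ]
    exact le_add_of_nonneg_right (sq_nonneg _)
  calc ∑ i ∈ range (n + 1 - 1), (u (i + 1) - u i) ^ 2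
      ≤ ∑ i ∈ range n, (2 * u (i + 1) ^ 2 + 2 * u i ^ 2) := by
        rw [Nat.add_sub_cancel]
        exact sum_le_sum fun i _ => by nlinarith [sq_nonneg (u (i + 1) + u i)]
    _ ≤ 4 * ∑ i ∈ range (n + 1), u i ^ 2 := by
        rw [sum_add_distrib, ← mul_sum, ← mul_sum]
        linarith

theorem gradient_normSq_eq (n : ℕ) (Δx : ℝ) (τ u : ℕ → ℝ) (hτ : ∀ i < n, τ i ≠ 0) :
    ∑ i ∈ range n, (τ i * (u (i + 1) - u i) / Δx) ^ 2 * (τ i)⁻¹ * Δx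
      = Δx⁻¹ * ∑ i ∈ range n, τ i * (u (i + 1) - u i) ^ 2 := by
  rw [mul_sum]
  refine sum_congr rfl fun i hi => ?_
  have := hτ i (mem_range.mp hi)
  by_cases hΔx : Δx = 0
  · simp [hΔx]
  · field_simp

theorem gradient_normSq_le (N : ℕ) (Δx : ℝ) (hΔx : 0 < Δx) (ρ τ : ℕ → ℝ) (M m : ℝ)
    (hM : 0 ≤ M) (hm : 0 < m) (hτ : ∀ i < N - 1, τ i ≠ 0) (hτM : ∀ i < N - 1, τ i ≤ M)
    (hρm : ∀ i < N, m ≤ ρ i) (u : ℕ → ℝ) :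
    ∑ i ∈ range (N - 1), (τ i * (u (i + 1) - u i) / Δx) ^ 2 * (τ i)⁻¹ * Δx
      ≤ M / m * (4 / Δx ^ 2) * ∑ i ∈ range N, u i ^ 2 * ρ i * Δx := by
  have hgrad : ∑ i ∈ range (N - 1), τ i * (u (i + 1) - u i) ^ 2
      ≤ M * (4 * ∑ i ∈ range N, u i ^ 2) := by
    grw [← sum_range_sq_sub_succ_le, mul_sum]
    exact sum_le_sum fun i hi => by gcongr; exact hτM i (mem_range.mp hi)
  have hmass : m * ∑ i ∈ range N, u i ^ 2 * Δx ≤ ∑ i ∈ range N, u i ^ 2 * ρ i * Δx := by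
    rw [mul_sum]
    refine sum_le_sum fun i hi => ?_
    rw [mul_left_comm, ← mul_assoc]
    gcongr
    exact hρm i (mem_range.mp hi)
  rw [gradient_normSq_eq _ _ _ _ hτ]
  calc Δx⁻¹ * ∑ i ∈ range (N - 1), τ i * (u (i + 1) - u i) ^ 2
      ≤ Δx⁻¹ * (M * (4 * ∑ i ∈ range N, u i ^ 2)) := by gcongr
    _ = M / m * (4 / Δx ^ 2) * (m * ∑ i ∈ range N, u i ^ 2 * Δx) := by
        rw [← sum_mul]; field_simp
    _ ≤ M / m * (4 / Δx ^ 2) * ∑ i ∈ range N, u i ^ 2 * ρ i * Δx := by gcongr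

/-- Positivity of the primal conserved quantity under the generalized CFL condition:
with `s = √(max τ / min ρ)`, the quantity
`C = ‖u‖_ρ² + ‖(v+w)/2‖_τ² − (Δt/2)² ‖Au‖_τ²` satisfies
`C ≥ (1 − (sΔt/Δx)²)‖u‖_ρ² + ‖(v+w)/2‖_τ²`, hence `C ≥ 0` whenever `sΔt/Δx ≤ 1`. -/
theorem stmt_16
    (N : ℕ) (hN : 2 ≤ N) (Δx Δt : ℝ) (hΔx : 0 < Δx) (hΔt : 0 < Δt)
    (ρ τ : ℕ → ℝ)
    (hρ : ∀ i < N, 0 < ρ i) (hτ : ∀ i < N - 1, 0 < τ i)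
    (s : ℝ)
    (hs : s = Real.sqrt
      ((Finset.range (N - 1)).sup' (Finset.nonempty_range_iff.mpr (by omega)) τ
        / (Finset.range N).inf' (Finset.nonempty_range_iff.mpr (by omega)) ρ))
    (u v w : ℕ → ℝ) :
    ((∑ i ∈ Finset.range N, (u i)^2 * ρ i * Δx)
        + (∑ i ∈ Finset.range (N - 1), ((v i + w i) / 2)^2 * (τ i)⁻¹ * Δx)
        - (Δt / 2)^2
          * ∑ i ∈ Finset.range (N - 1), (τ i * (u (i + 1) - u i) / Δx)^2 * (τ i)⁻¹ * Δx
      ≥ (1 - (s * Δt / Δx)^2) * (∑ i ∈ Finset.range N, (u i)^2 * ρ i * Δx)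
        + (∑ i ∈ Finset.range (N - 1), ((v i + w i) / 2)^2 * (τ i)⁻¹ * Δx))
    ∧ (s * Δt / Δx ≤ 1 →
      0 ≤ (∑ i ∈ Finset.range N, (u i)^2 * ρ i * Δx)
        + (∑ i ∈ Finset.range (N - 1), ((v i + w i) / 2)^2 * (τ i)⁻¹ * Δx)
        - (Δt / 2)^2
          * ∑ i ∈ Finset.range (N - 1), (τ i * (u (i + 1) - u i) / Δx)^2 * (τ i)⁻¹ * Δx) := by
  set M := (Finset.range (N - 1)).sup' (Finset.nonempty_range_iff.mpr (by omega)) τ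
  set m := (Finset.range N).inf' (Finset.nonempty_range_iff.mpr (by omega)) ρ
  have hM : 0 ≤ M := (hτ 0 (by omega)).le.trans (le_sup' τ (mem_range.mpr (by omega)))
  have hm : 0 < m := (lt_inf'_iff _).mpr fun i hi => hρ i (mem_range.mp hi)
  set U := ∑ i ∈ range N, u i ^ 2 * ρ i * Δx
  set A := ∑ i ∈ range (N - 1), (τ i * (u (i + 1) - u i) / Δx) ^ 2 * (τ i)⁻¹ * Δx
  have hU : 0 ≤ U := sum_nonneg fun i hi => by have := hρ i (mem_range.mp hi); positivity
  have hs2 : M / m ≤ s ^ 2 := by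
    rw [hs, Real.sq_sqrt']
    exact le_max_left _ _
  have hkinetic : (Δt / 2) ^ 2 * A ≤ (s * Δt / Δx) ^ 2 * U :=
    calc (Δt / 2) ^ 2 * A ≤ (Δt / 2) ^ 2 * (M / m * (4 / Δx ^ 2) * U) := by
          gcongr
          exact gradient_normSq_le N Δx hΔx ρ τ M m hM hm (fun i hi => (hτ i hi).ne')
            (fun i hi => le_sup' τ (mem_range.mpr hi)) (fun i hi => inf'_le ρ (mem_range.mpr hi)) u
      _ = M / m * (Δt / Δx) ^ 2 * U := by field_simp; ring
      _ ≤ s ^ 2 * (Δt / Δx) ^ 2 * U := by gcongr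
      _ = (s * Δt / Δx) ^ 2 * U := by ring
  refine ⟨by linarith, fun hcfl => ?_⟩
  have hs0 : 0 ≤ s := hs ▸ Real.sqrt_nonneg _
  have hcfl2 : (s * Δt / Δx) ^ 2 ≤ 1 := pow_le_one₀ (by positivity) hcfl
  have hV : 0 ≤ ∑ i ∈ range (N - 1), ((v i + w i) / 2) ^ 2 * (τ i)⁻¹ * Δx :=
    sum_nonneg fun i hi => by have := hτ i (mem_range.mp hi); positivity
  linarith [mul_nonneg (sub_nonneg.mpr hcfl2) hU]
end

section
/- Fix an integer N ≥ 3, Δx > 0, Δt > 0, and let ρ : {0,…,N−1} → ℝ and τ : {0,…,N−2} → ℝ have positive values. Set s = √(max τ / min ρ), where max τ = max_{0≤i≤N−2} τ_i and min ρ = min_{0≤i≤N−1} ρ_i. Then for any primal-grid functions u, w and dual-grid function v, the quantity C = ‖(u + w)/2‖_ρ² + ‖v‖_τ² − (Δt/2)²·‖A*v‖_ρ², with (A*v)_i = −(v_i − v_{i−1})/(ρ_i·Δx) for 1 ≤ i ≤ N−2 and (A*v)_0 = (A*v)_{N−1} = 0, satisfies C ≥ ‖(u + w)/2‖_ρ²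 + (1 − (s·Δt/Δx)²)·‖v‖_τ². In particular, C ≥ 0 whenever s·Δt/Δx ≤ 1. -/
/-!
Each difference quotient satisfies `(vᵢ - vᵢ₋₁)² ≤ 2vᵢ² + 2vᵢ₋₁²`, so with `ρ ≥ min ρ` one gets
`‖A*v‖_ρ² ≤ 4 / (min ρ · Δx) · ∑ vᵢ²`, and `∑ vᵢ² ≤ max τ · ∑ vᵢ² / τᵢ`. Together,
`(Δt/2)² ‖A*v‖_ρ² ≤ (max τ / min ρ) (Δt/Δx)² ‖v‖_τ² = (sΔt/Δx)² ‖v‖_τ²`.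
-/

open Finset

theorem sum_Ico_sub_pred_sq_le (v : ℕ → ℝ) (n : ℕ) :
    ∑ i ∈ Ico 1 n, (v i - v (i - 1)) ^ 2 ≤ 4 * ∑ i ∈ range n, v i ^ 2 := by
  have hcur : ∑ i ∈ Ico 1 n, v i ^ 2 ≤ ∑ i ∈ range n, v i ^ 2 :=
    sum_le_sum_of_subset_of_nonneg (fun i hi => by simp at hi ⊢; omega)
      (fun i _ _ => sq_nonneg _)
  have hpred : ∑ i ∈ Ico 1 n, v (i - 1) ^ 2 ≤ ∑ i ∈ range n, v i ^ 2 := by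
    rw [sum_Ico_eq_sum_range]
    simp only [Nat.add_sub_cancel_left]
    exact sum_le_sum_of_subset_of_nonneg (range_subset_range.mpr (by omega))
      (fun i _ _ => sq_nonneg _)
  calc ∑ i ∈ Ico 1 n, (v i - v (i - 1)) ^ 2
      ≤ ∑ i ∈ Ico 1 n, (2 * v i ^ 2 + 2 * v (i - 1) ^ 2) :=
        sum_le_sum fun i _ => by linarith [sq_nonneg (v i + v (i - 1))]
    _ = 2 * ∑ i ∈ Ico 1 n, v i ^ 2 + 2 * ∑ i ∈ Ico 1 n, v (i - 1) ^ 2 := by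
        rw [sum_add_distrib, mul_sum, mul_sum]
    _ ≤ 4 * ∑ i ∈ range n, v i ^ 2 := by linarith

theorem sum_le_sup'_mul_sum_div {ι : Type*} (s : Finset ι) (hs : s.Nonempty) (τ f : ι → ℝ)
    (hτ : ∀ i ∈ s, 0 < τ i) (hf : ∀ i ∈ s, 0 ≤ f i) :
    ∑ i ∈ s, f i ≤ s.sup' hs τ * ∑ i ∈ s, f i * (τ i)⁻¹ := by
  rw [mul_sum]
  refine sum_le_sum fun i hi => ?_
  calc f i = τ i * (f i * (τ i)⁻¹) := by field_simp [(hτ i hi).ne']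
    _ ≤ s.sup' hs τ * (f i * (τ i)⁻¹) :=
        mul_le_mul_of_nonneg_right (le_sup' τ hi)
          (mul_nonneg (hf i hi) (inv_nonneg.mpr (hτ i hi).le))

theorem sum_dualGradient_sq_le {N : ℕ} {Δx m : ℝ} (hΔx : 0 < Δx) (hm : 0 < m) {ρ : ℕ → ℝ}
    (hρ : ∀ i < N, m ≤ ρ i) (v : ℕ → ℝ) :
    ∑ i ∈ range N,
        (if 1 ≤ i ∧ i ≤ N - 2 then -((v i - v (i - 1)) / (ρ i * Δx)) else 0) ^ 2 * ρ i * Δx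
      ≤ 4 / (m * Δx) * ∑ i ∈ range (N - 1), v i ^ 2 := by
  have hsupport : (range N).filter (fun i => 1 ≤ i ∧ i ≤ N - 2) = Ico 1 (N - 1) := by
    ext i; simp only [mem_filter, mem_range, mem_Ico]; omega
  calc ∑ i ∈ range N,
        (if 1 ≤ i ∧ i ≤ N - 2 then -((v i - v (i - 1)) / (ρ i * Δx)) else 0) ^ 2 * ρ i * Δx
      = ∑ i ∈ Ico 1 (N - 1), (v i - v (i - 1)) ^ 2 / (ρ i * Δx) := by
        rw [← hsupport, sum_filter]
        refine sum_congr rfl fun i hi => ?_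
        have hρi : 0 < ρ i := hm.trans_le (hρ i (mem_range.mp hi))
        split_ifs
        · field_simp
        · simp
    _ ≤ ∑ i ∈ Ico 1 (N - 1), (v i - v (i - 1)) ^ 2 / (m * Δx) := by
        refine sum_le_sum fun i hi => ?_
        have hρi : m ≤ ρ i := hρ i (by simp at hi; omega)
        gcongr
    _ ≤ 4 / (m * Δx) * ∑ i ∈ range (N - 1), v i ^ 2 := by
        rw [← sum_div, div_mul_eq_mul_div, mul_comm]
        gcongr
        exact sum_Ico_sub_pred_sq_le v (N - 1)

/-- Positivity of the dual conserved quantity under the generalized CFL condition: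
with `s = √(max τ / min ρ)`, the quantity
`C = ‖(u+w)/2‖_ρ² + ‖v‖_τ² − (Δt/2)² ‖A*v‖_ρ²` satisfies
`C ≥ ‖(u+w)/2‖_ρ² + (1 − (sΔt/Δx)²)‖v‖_τ²`, hence `C ≥ 0` whenever `sΔt/Δx ≤ 1`. -/
theorem stmt_17
    (N : ℕ) (hN : 3 ≤ N) (Δx Δt : ℝ) (hΔx : 0 < Δx) (hΔt : 0 < Δt)
    (ρ τ : ℕ → ℝ)
    (hρ : ∀ i < N, 0 < ρ i) (hτ : ∀ i < N - 1, 0 < τ i)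
    (s : ℝ)
    (hs : s = Real.sqrt
      ((Finset.range (N - 1)).sup' (Finset.nonempty_range_iff.mpr (by omega)) τ
        / (Finset.range N).inf' (Finset.nonempty_range_iff.mpr (by omega)) ρ))
    (u w v : ℕ → ℝ) :
    ((∑ i ∈ Finset.range N, ((u i + w i) / 2)^2 * ρ i * Δx)
        + (∑ i ∈ Finset.range (N - 1), (v i)^2 * (τ i)⁻¹ * Δx)
        - (Δt / 2)^2
          * ∑ i ∈ Finset.range N,
              (if 1 ≤ i ∧ i ≤ N - 2 then -((v i - v (i - 1)) / (ρ i * Δx)) else 0)^2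
                * ρ i * Δx
      ≥ (∑ i ∈ Finset.range N, ((u i + w i) / 2)^2 * ρ i * Δx)
        + (1 - (s * Δt / Δx)^2) * (∑ i ∈ Finset.range (N - 1), (v i)^2 * (τ i)⁻¹ * Δx))
    ∧ (s * Δt / Δx ≤ 1 →
      0 ≤ (∑ i ∈ Finset.range N, ((u i + w i) / 2)^2 * ρ i * Δx)
        + (∑ i ∈ Finset.range (N - 1), (v i)^2 * (τ i)⁻¹ * Δx)
        - (Δt / 2)^2
          * ∑ i ∈ Finset.range N,
              (if 1 ≤ i ∧ i ≤ N - 2 then -((v i - v (i - 1)) / (ρ i * Δx)) else 0)^2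
                * ρ i * Δx) := by
  set M := (range (N - 1)).sup' (nonempty_range_iff.mpr (by omega)) τ
  set m := (range N).inf' (nonempty_range_iff.mpr (by omega)) ρ
  have hM : 0 < M := (hτ 0 (by omega)).trans_le (le_sup' τ (by simp; omega))
  have hm : 0 < m := (lt_inf'_iff _).mpr fun i hi => hρ i (mem_range.mp hi)
  have hs2 : s ^ 2 = M / m := by rw [hs, Real.sq_sqrt (by positivity)]
  set S := ∑ i ∈ range (N - 1), v i ^ 2 * (τ i)⁻¹
  have hgrad := sum_dualGradient_sq_le hΔx hm (fun i hi => inf'_le ρ (mem_range.mpr hi)) v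
  have hv := sum_le_sup'_mul_sum_div _ (nonempty_range_iff.mpr (by omega)) τ (fun i => v i ^ 2)
    (fun i hi => hτ i (mem_range.mp hi)) (fun i _ => sq_nonneg (v i))
  have hdefect : (Δt / 2) ^ 2 * ∑ i ∈ range N,
        (if 1 ≤ i ∧ i ≤ N - 2 then -((v i - v (i - 1)) / (ρ i * Δx)) else 0) ^ 2 * ρ i * Δx
      ≤ (s * Δt / Δx) ^ 2 * (S * Δx) := by
    calc _ ≤ (Δt / 2) ^ 2 * (4 / (m * Δx) * (M * S)) :=
          mul_le_mul_of_nonneg_left (hgrad.trans (mul_le_mul_of_nonneg_left hv (by positivity)))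
            (sq_nonneg _)
      _ = (s * Δt / Δx) ^ 2 * (S * Δx) := by
          rw [show (s * Δt / Δx) ^ 2 = s ^ 2 * Δt ^ 2 / Δx ^ 2 by ring, hs2]
          field_simp
          ring
  have hS : 0 ≤ S := sum_nonneg fun i hi => by have := hτ i (mem_range.mp hi); positivity
  have hτsum : ∑ i ∈ range (N - 1), v i ^ 2 * (τ i)⁻¹ * Δx = S * Δx := (sum_mul ..).symm
  rw [hτsum]
  refine ⟨by linarith, fun hcfl => ?_⟩
  have hcfl2 : (s * Δt / Δx) ^ 2 ≤ 1 := pow_le_one₀ (by rw [hs]; positivity) hcfl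
  have hu : 0 ≤ ∑ i ∈ range N, ((u i + w i) / 2) ^ 2 * ρ i * Δx :=
    sum_nonneg fun i hi => by have := hρ i (mem_range.mp hi); positivity
  linarith [mul_le_mul_of_nonneg_right hcfl2 (mul_nonneg hS hΔx.le)]
end
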